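/- arXiv:1208.5658 — 5 statements merged into one kernel-verified Lean document; each statement's English description precedes it below -/
import Mathlib

section
/- Suppose there exists a function γ : {0,…,n₁}×⋯×{0,…,n_r} → ℝ such that for EVERY choice of semicoherent structures χⱼ : 2^{Cⱼ} → {0,1} (j = 1,…,r) and semicoherent ψ : 2^{[r]} → {0,1}, the composed structure φ(A) = ψ({ j : χⱼ(A ∩ Cⱼ) = 1 }) satisfies, for all 0 ≤ k ≤ n, ∑_{A⊆[n],|A|=k} q(A)·φ(A) = ∑_{(a₁,…,a_r)∈𝒯_k} γ(a₁,…,a_r)·ψ̂(P̄_{1,n₁−a₁},…,P̄_{r,n_r−a_r}), where P̄_{j,nⱼ−a} = ∑_{B⊆Cⱼ,|B|=a} q^{Cⱼ}(B)·χⱼ(B). Then q(A) = γ(|A₁|,…,|A_r|)·∏ⱼ q^{Cⱼ}(Aⱼ) for every nonempty A ⊆ [n]; in particular q is 𝒞-decomposable. -/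
open MeasureTheory Finset
open scoped Classical

noncomputable section

/-- The relative quality function: probability that the best `|A|` components
are precisely those in `A`. -/
def relQ {Ω : Type*} [MeasurableSpace Ω] (μ : Measure Ω) {n : ℕ}
    (T : Fin n → Ω → ℝ) (A : Finset (Fin n)) : ℝ :=
  (μ {ω | ∀ i ∉ A, ∀ l ∈ A, T i ω < T l ω}).toReal

/-- The relative quality function of a block `Cj`. -/
def relQBlock {Ω : Type*} [MeasurableSpace Ω] (μ : Measure Ω) {n : ℕ}
    (T : Fin n → Ω → ℝ) (Cj B : Finset (Fin n)) : ℝ :=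
  (μ {ω | ∀ i ∈ Cj \ B, ∀ l ∈ B, T i ω < T l ω}).toReal

/-- Lifetimes with no ties. -/
def NoTies {Ω : Type*} [MeasurableSpace Ω] (μ : Measure Ω) {n : ℕ}
    (T : Fin n → Ω → ℝ) : Prop :=
  ∀ i j : Fin n, i ≠ j → μ {ω | T i ω = T j ω} = 0

/-- A semicoherent structure function on the full component set. -/
def Semicoherent {ι : Type*} [Fintype ι] (φ : Finset ι → ℝ) : Prop :=
  (∀ A B : Finset ι, A ⊆ B → φ A ≤ φ B) ∧ (∀ A : Finset ι, φ A = 0 ∨ φ A = 1) ∧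
    φ ∅ = 0 ∧ φ Finset.univ = 1

/-- A semicoherent structure function on the subsets of a block `Cj`. -/
def SemicoherentOn {ι : Type*} (Cj : Finset ι) (χ : Finset ι → ℝ) : Prop :=
  (∀ A B : Finset ι, A ⊆ B → B ⊆ Cj → χ A ≤ χ B) ∧
    (∀ A : Finset ι, A ⊆ Cj → χ A = 0 ∨ χ A = 1) ∧ χ ∅ = 0 ∧ χ Cj = 1

/-- The multilinear extension of `ψ : 2^{[r]} → ℝ`. -/
def MLE {r : ℕ} (ψ : Finset (Fin r) → ℝ) (z : Fin r → ℝ) : ℝ :=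
  ∑ B : Finset (Fin r), ψ B * (∏ j ∈ B, z j) * ∏ j ∈ Bᶜ, (1 - z j)

/-- The set `𝒯_k` of integer `r`-tuples `a` with `0 ≤ a j ≤ |C j|` and `∑ j, a j = k`. -/
def tuples {n r : ℕ} (C : Fin r → Finset (Fin n)) (k : ℕ) : Finset (Fin r → ℕ) :=
  (Fintype.piFinset fun j => Finset.range ((C j).card + 1)).filter fun a => ∑ j, a j = k

/-- Tail probability signature entry of module `(Cj, χ)`:
`P̄_{j, n_j - a} = ∑_{B ⊆ Cj, |B| = a} q^{Cj}(B) · χ(B)`. -/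
def tailP {Ω : Type*} [MeasurableSpace Ω] (μ : Measure Ω) {n : ℕ}
    (T : Fin n → Ω → ℝ) (Cj : Finset (Fin n)) (χ : Finset (Fin n) → ℝ) (a : ℕ) : ℝ :=
  ∑ B ∈ Cj.powerset.filter fun B => B.card = a, relQBlock μ T Cj B * χ B

lemma mle_indicator {r : ℕ} (J : Finset (Fin r)) (z : Fin r → ℝ) :
    MLE (fun S => if J ⊆ S then (1:ℝ) else 0) z = ∏ j ∈ J, z j := by
  classical
  unfold MLE
  have key : ∀ B : Finset (Fin r),
      (if J ⊆ B then (1:ℝ) else 0) * (∏ j ∈ B, z j) * ∏ j ∈ Bᶜ, (1 - z j)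
        = (∏ j ∈ B, z j) * ∏ j ∈ Finset.univ \ B, (if j ∈ J then (0:ℝ) else (1 - z j)) := by
    intro B
    by_cases h : J ⊆ B
    · rw [if_pos h, one_mul]
      congr 1
      rw [← Finset.compl_eq_univ_sdiff]
      refine Finset.prod_congr rfl fun j hj => ?_
      rw [if_neg fun hjJ => (Finset.mem_compl.mp hj) (h hjJ)]
    · rw [if_neg h, zero_mul, zero_mul]
      obtain ⟨j, hjJ, hjB⟩ := Finset.not_subset.mp h
      have hz : (if j ∈ J then (0:ℝ) else 1 - z j) = 0 := if_pos hjJ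
      rw [Finset.prod_eq_zero (Finset.mem_sdiff.mpr ⟨Finset.mem_univ j, hjB⟩) hz, mul_zero]
  rw [Finset.sum_congr rfl fun B _ => key B]
  have hpa := (Finset.prod_add (fun j => z j)
    (fun j => if j ∈ J then (0:ℝ) else (1 - z j)) (Finset.univ : Finset (Fin r))).symm
  rw [Finset.powerset_univ] at hpa
  rw [show (∑ B : Finset (Fin r), (∏ j ∈ B, z j) *
        ∏ j ∈ Finset.univ \ B, (if j ∈ J then (0:ℝ) else (1 - z j)))
      = ∑ B ∈ Finset.univ, (∏ j ∈ B, z j) *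
        ∏ j ∈ Finset.univ \ B, (if j ∈ J then (0:ℝ) else (1 - z j)) from rfl, hpa]
  have : ∀ j : Fin r, (z j + if j ∈ J then (0:ℝ) else (1 - z j))
      = if j ∈ J then z j else 1 := by
    intro j; by_cases hj : j ∈ J <;> simp [hj]
  rw [Finset.prod_congr rfl fun j _ => this j, Finset.prod_ite_mem, Finset.univ_inter]

/-- Theorem 4.1, necessity of `𝒞`-decomposability. -/
theorem stmt2 {Ω : Type*} [MeasurableSpace Ω] (μ : Measure Ω) [IsProbabilityMeasure μ]
    {n r : ℕ} (T : Fin n → Ω → ℝ)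
    (C : Fin r → Finset (Fin n)) (hne : ∀ j, (C j).Nonempty)
    (hdisj : ∀ i j : Fin r, i ≠ j → Disjoint (C i) (C j))
    (hcover : ∀ x : Fin n, ∃ j, x ∈ C j)
    (γ : (Fin r → ℕ) → ℝ)
    (hγ : ∀ χ : Fin r → Finset (Fin n) → ℝ, (∀ j, SemicoherentOn (C j) (χ j)) →
      ∀ ψ : Finset (Fin r) → ℝ, Semicoherent ψ →
      ∀ k ≤ n,
        ∑ A ∈ Finset.univ.filter fun A : Finset (Fin n) => A.card = k,
            relQ μ T A * ψ (Finset.univ.filter fun j => χ j (A ∩ C j) = 1)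
          = ∑ a ∈ tuples C k, γ a * MLE ψ (fun j => tailP μ T (C j) (χ j) (a j))) :
    (∀ A : Finset (Fin n), A.Nonempty →
        relQ μ T A = γ (fun j => (A ∩ C j).card) * ∏ j, relQBlock μ T (C j) (A ∩ C j))
      ∧ ∃ ctil : (Fin r → ℕ) → ℝ, ∀ A : Finset (Fin n),
          relQ μ T A = ctil (fun j => (A ∩ C j).card)
            * ∏ j, relQBlock μ T (C j) (A ∩ C j) := by
  classical
  have hblock_empty : ∀ j : Fin r, relQBlock μ T (C j) ∅ = 1 := by
    intro j
    have hset : {ω : Ω | ∀ i ∈ (C j) \ (∅ : Finset (Fin n)),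
        ∀ l ∈ (∅ : Finset (Fin n)), T i ω < T l ω} = Set.univ := by
      ext ω; simp
    rw [relQBlock, hset, measure_univ, ENNReal.toReal_one]
  have hcardsum : ∀ A : Finset (Fin n), ∑ j, (A ∩ C j).card = A.card := by
    intro A
    have hone : ∀ x ∈ A, (∑ j, if x ∈ C j then (1:ℕ) else 0) = 1 := by
      intro x _
      obtain ⟨j0, hj0⟩ := hcover x
      rw [Finset.sum_eq_single_of_mem j0 (Finset.mem_univ j0)]
      · rw [if_pos hj0]
      · intro j _ hjne
        exact if_neg fun hx => (Finset.disjoint_left.mp (hdisj j j0 hjne)) hx hj0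
    calc ∑ j, (A ∩ C j).card
        = ∑ j, ∑ x ∈ A, (if x ∈ C j then (1:ℕ) else 0) := by
          refine Finset.sum_congr rfl fun j _ => ?_
          rw [← Finset.filter_mem_eq_inter, Finset.card_filter]
      _ = ∑ x ∈ A, ∑ j, (if x ∈ C j then (1:ℕ) else 0) := Finset.sum_comm
      _ = ∑ x ∈ A, 1 := Finset.sum_congr rfl hone
      _ = A.card := by simp
  have main : ∀ A : Finset (Fin n), A.Nonempty →
      relQ μ T A = γ (fun j => (A ∩ C j).card) * ∏ j, relQBlock μ T (C j) (A ∩ C j) := by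
    intro A hAne
    set J : Finset (Fin r) := Finset.univ.filter (fun j => (A ∩ C j).Nonempty) with hJ
    set χ : Fin r → Finset (Fin n) → ℝ := fun j B =>
      if (A ∩ C j).Nonempty then (if A ∩ C j ⊆ B then 1 else 0)
      else (if B = C j then 1 else 0) with hχ
    set ψ : Finset (Fin r) → ℝ := fun S => if J ⊆ S then 1 else 0 with hψ
    have hχval : ∀ j, (A ∩ C j).Nonempty →
        ∀ B, χ j B = if A ∩ C j ⊆ B then (1:ℝ) else 0 := by
      intro j hj B; rw [hχ]; simp only [if_pos hj]
    have hχsc : ∀ j, SemicoherentOn (C j) (χ j) := by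
      intro j
      by_cases hj : (A ∩ C j).Nonempty
      · refine ⟨?_, ?_, ?_, ?_⟩
        · intro B1 B2 h12 _
          rw [hχval j hj, hχval j hj]
          by_cases h1 : A ∩ C j ⊆ B1
          · rw [if_pos h1, if_pos (h1.trans h12)]
          · rw [if_neg h1]; split <;> norm_num
        · intro B _; rw [hχval j hj]; split <;> simp
        · rw [hχval j hj, if_neg fun h => hj.ne_empty (Finset.subset_empty.mp h)]
        · rw [hχval j hj, if_pos Finset.inter_subset_right]
      · refine ⟨?_, ?_, ?_, ?_⟩
        · intro B1 B2 h12 h2C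
          rw [hχ]; simp only [if_neg hj]
          by_cases h1 : B1 = C j
          · rw [if_pos h1, if_pos (Finset.Subset.antisymm h2C (h1 ▸ h12))]
          · rw [if_neg h1]; split <;> norm_num
        · intro B _; rw [hχ]; simp only [if_neg hj]; split <;> simp
        · rw [hχ]; simp only [if_neg hj]
          rw [if_neg fun h => (hne j).ne_empty h.symm]
        · rw [hχ]; simp [hj]
    have hJne : J.Nonempty := by
      obtain ⟨x, hx⟩ := hAne
      obtain ⟨j, hj⟩ := hcover x
      exact ⟨j, by simp [hJ]; exact ⟨x, by simp [hx, hj]⟩⟩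
    have hψsc : Semicoherent ψ := by
      refine ⟨?_, ?_, ?_, ?_⟩
      · intro S1 S2 h12
        rw [hψ]; simp only
        by_cases h1 : J ⊆ S1
        · rw [if_pos h1, if_pos (h1.trans h12)]
        · rw [if_neg h1]; split <;> norm_num
      · intro S; rw [hψ]; simp only; split <;> simp
      · rw [hψ]; simp only
        rw [if_neg fun h => hJne.ne_empty (Finset.subset_empty.mp h)]
      · rw [hψ]; simp only [if_pos (Finset.subset_univ J)]
    have hkn : A.card ≤ n := by
      have := Finset.card_le_card (Finset.subset_univ A)
      simpa using this
    have hk := hγ χ hχsc ψ hψsc A.card hkn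
    -- LHS
    have hLHS : ∑ A' ∈ Finset.univ.filter (fun A' : Finset (Fin n) => A'.card = A.card),
        relQ μ T A' * ψ (Finset.univ.filter fun j => χ j (A' ∩ C j) = 1) = relQ μ T A := by
      have hmem : A ∈ Finset.univ.filter (fun A' : Finset (Fin n) => A'.card = A.card) := by
        simp
      have h0 : ∀ A' ∈ Finset.univ.filter (fun A' : Finset (Fin n) => A'.card = A.card),
          A' ≠ A → relQ μ T A' * ψ (Finset.univ.filter fun j => χ j (A' ∩ C j) = 1) = 0 := by
        intro A' hA' hneq
        have hnsub : ¬ J ⊆ Finset.univ.filter fun j => χ j (A' ∩ C j) = 1 := by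
          intro hsub
          apply hneq
          have hAsub : A ⊆ A' := by
            intro x hx
            obtain ⟨j0, hj0⟩ := hcover x
            have hj0ne : (A ∩ C j0).Nonempty := ⟨x, Finset.mem_inter.mpr ⟨hx, hj0⟩⟩
            have hj0J : j0 ∈ J := by simp [hJ, hj0ne]
            have hχ1 := (Finset.mem_filter.mp (hsub hj0J)).2
            rw [hχval j0 hj0ne] at hχ1
            by_cases hss : A ∩ C j0 ⊆ A' ∩ C j0
            · exact Finset.mem_of_mem_inter_left (hss (Finset.mem_inter.mpr ⟨hx, hj0⟩))
            · rw [if_neg hss] at hχ1; norm_num at hχ1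
          have hcard : A'.card ≤ A.card := le_of_eq (Finset.mem_filter.mp hA').2
          exact (Finset.eq_of_subset_of_card_le hAsub hcard).symm
        rw [hψ]; simp only [if_neg hnsub, mul_zero]
      rw [Finset.sum_eq_single_of_mem A hmem h0]
      have hsub : J ⊆ Finset.univ.filter fun j => χ j (A ∩ C j) = 1 := by
        intro j hj
        have hjne : (A ∩ C j).Nonempty := by
          simpa [hJ] using hj
        refine Finset.mem_filter.mpr ⟨Finset.mem_univ j, ?_⟩
        rw [hχval j hjne, if_pos (Finset.Subset.refl _)]
      rw [hψ]; simp only [if_pos hsub, mul_one]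
    -- tail probabilities
    have htail_lt : ∀ j ∈ J, ∀ a : ℕ, a < (A ∩ C j).card →
        tailP μ T (C j) (χ j) a = 0 := by
      intro j hj a ha
      have hjne : (A ∩ C j).Nonempty := by simpa [hJ] using hj
      refine Finset.sum_eq_zero fun B hB => ?_
      obtain ⟨-, hBcard⟩ := Finset.mem_filter.mp hB
      have hnsub : ¬ (A ∩ C j ⊆ B) := fun hsub => by
        have := Finset.card_le_card hsub; omega
      rw [hχval j hjne, if_neg hnsub, mul_zero]
    have htail_eq : ∀ j ∈ J,
        tailP μ T (C j) (χ j) (A ∩ C j).card = relQBlock μ T (C j) (A ∩ C j) := by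
      intro j hj
      have hjne : (A ∩ C j).Nonempty := by simpa [hJ] using hj
      have hmemB : A ∩ C j ∈ (C j).powerset.filter
          (fun B => B.card = (A ∩ C j).card) := by
        simp [Finset.inter_subset_right]
      have h0 : ∀ B ∈ (C j).powerset.filter (fun B => B.card = (A ∩ C j).card),
          B ≠ A ∩ C j → relQBlock μ T (C j) B * χ j B = 0 := by
        intro B hB hneq
        obtain ⟨-, hBcard⟩ := Finset.mem_filter.mp hB
        have hnsub : ¬ (A ∩ C j ⊆ B) := fun hsub =>
          hneq (Finset.eq_of_subset_of_card_le hsub (le_of_eq hBcard)).symm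
        rw [hχval j hjne, if_neg hnsub, mul_zero]
      rw [tailP, Finset.sum_eq_single_of_mem _ hmemB h0, hχval j hjne,
        if_pos (Finset.Subset.refl _), mul_one]
    -- a* membership
    have hastar : (fun j => (A ∩ C j).card) ∈ tuples C A.card := by
      refine Finset.mem_filter.mpr ⟨Fintype.mem_piFinset.mpr fun j => ?_, hcardsum A⟩
      exact Finset.mem_range.mpr (Nat.lt_succ_of_le (Finset.card_le_card
        Finset.inter_subset_right))
    -- RHS
    have hsumJ : ∑ j ∈ J, (A ∩ C j).card = A.card := by
      rw [← hcardsum A]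
      refine Finset.sum_subset (Finset.subset_univ J) fun j _ hj => ?_
      have : A ∩ C j = ∅ := Finset.not_nonempty_iff_eq_empty.mp (by simpa [hJ] using hj)
      simp [this]
    have h0' : ∀ a ∈ tuples C A.card, a ≠ (fun j => (A ∩ C j).card) →
        γ a * MLE ψ (fun j => tailP μ T (C j) (χ j) (a j)) = 0 := by
      intro a ha hneq
      obtain ⟨hpi, hsum⟩ := Finset.mem_filter.mp ha
      have hexists : ∃ j ∈ J, a j < (A ∩ C j).card := by
        by_contra hcon
        push_neg at hcon
        have hle : ∀ j ∈ J, (A ∩ C j).card ≤ a j := hcon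
        have hJle : ∑ j ∈ J, a j ≤ ∑ j, a j :=
          Finset.sum_le_sum_of_subset (Finset.subset_univ J)
        have h1 : ∑ j ∈ J, (A ∩ C j).card ≤ ∑ j ∈ J, a j := Finset.sum_le_sum hle
        have heq : ∑ j ∈ J, (A ∩ C j).card = ∑ j ∈ J, a j := by omega
        have hptwise : ∀ j ∈ J, (A ∩ C j).card = a j :=
          (Finset.sum_eq_sum_iff_of_le hle).mp heq
        have hoff : ∑ j ∈ Finset.univ \ J, a j = 0 := by
          have hsplit := Finset.sum_sdiff (f := a) (Finset.subset_univ J)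
          omega
        have hoffz : ∀ j ∈ Finset.univ \ J, a j = 0 := by
          intro j hj
          exact Finset.sum_eq_zero_iff.mp hoff j hj
        apply hneq
        funext j
        by_cases hj : j ∈ J
        · exact (hptwise j hj).symm
        · have h1 : a j = 0 := hoffz j (by simp [hj])
          have h2 : A ∩ C j = ∅ :=
            Finset.not_nonempty_iff_eq_empty.mp (by simpa [hJ] using hj)
          simp [h1, h2]
      obtain ⟨j, hjJ, hjlt⟩ := hexists
      rw [hψ, mle_indicator, Finset.prod_eq_zero hjJ (htail_lt j hjJ (a j) hjlt),
        mul_zero]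
    have hRHS : ∑ a ∈ tuples C A.card, γ a * MLE ψ (fun j => tailP μ T (C j) (χ j) (a j))
        = γ (fun j => (A ∩ C j).card) * ∏ j, relQBlock μ T (C j) (A ∩ C j) := by
      rw [Finset.sum_eq_single_of_mem _ hastar h0', hψ, mle_indicator]
      congr 1
      calc ∏ j ∈ J, tailP μ T (C j) (χ j) ((fun j => (A ∩ C j).card) j)
          = ∏ j ∈ J, relQBlock μ T (C j) (A ∩ C j) :=
            Finset.prod_congr rfl fun j hj => htail_eq j hj
        _ = ∏ j : Fin r, relQBlock μ T (C j) (A ∩ C j) := by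
            refine Finset.prod_subset (Finset.subset_univ J) fun j _ hj => ?_
            have h2 : A ∩ C j = ∅ :=
              Finset.not_nonempty_iff_eq_empty.mp (by simpa [hJ] using hj)
            rw [h2, hblock_empty]
    rw [← hLHS, hk, hRHS]
  refine ⟨main, ⟨fun a => if ∀ j, a j = 0 then 1 else γ a, fun A => ?_⟩⟩
  by_cases hA : A.Nonempty
  · have hnz : ¬ ∀ j : Fin r, ((fun j => (A ∩ C j).card) j) = 0 := by
      push_neg
      obtain ⟨x, hx⟩ := hA
      obtain ⟨j, hj⟩ := hcover x
      exact ⟨j, Finset.card_ne_zero.mpr ⟨x, Finset.mem_inter.mpr ⟨hx, hj⟩⟩⟩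
    have hctil : ((fun a => if ∀ j, a j = 0 then (1:ℝ) else γ a) fun j => (A ∩ C j).card)
        = γ fun j => (A ∩ C j).card := if_neg hnz
    rw [main A hA, hctil]
  · rw [Finset.not_nonempty_iff_eq_empty] at hA
    subst hA
    have hctil : ((fun a => if ∀ j, a j = 0 then (1:ℝ) else γ a)
        fun j => ((∅ : Finset (Fin n)) ∩ C j).card) = 1 := if_pos (fun j => by simp)
    rw [hctil]
    have h1 : relQ μ T ∅ = 1 := by
      have hset : {ω : Ω | ∀ i ∉ (∅ : Finset (Fin n)),
          ∀ l ∈ (∅ : Finset (Fin n)), T i ω < T l ω} = Set.univ := by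
        ext ω; simp
      rw [relQ, hset, measure_univ, ENNReal.toReal_one]
    rw [h1, one_mul]
    exact (Finset.prod_eq_one fun j _ => by
      rw [Finset.empty_inter]; exact hblock_empty j).symm
end
end

section
/- Assume the component lifetimes have no ties. If the relative quality function q is 𝒞-symmetric (i.e. q(A) = q(A') whenever |A ∩ Cⱼ| = |A' ∩ Cⱼ| for all j) and each block function q^{Cⱼ} is symmetric (i.e. q^{Cⱼ}(B) = q^{Cⱼ}(B') whenever B, B' ⊆ Cⱼ and |B| = |B'|), then q is 𝒞-decomposable. -/
open MeasureTheory Finset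
open scoped Classical

noncomputable section

lemma relQ_le_block {Ω : Type*} [MeasurableSpace Ω] (μ : Measure Ω) [IsProbabilityMeasure μ]
    {n : ℕ} (T : Fin n → Ω → ℝ) (Cj A : Finset (Fin n)) :
    relQ μ T A ≤ relQBlock μ T Cj (A ∩ Cj) := by
  apply ENNReal.toReal_mono (measure_ne_top μ _)
  apply measure_mono
  intro ω hω i hi l hl
  simp only [Finset.mem_sdiff, Finset.mem_inter, not_and] at hi hl
  exact hω i (fun h => hi.2 h hi.1) l hl.1

/-- Proposition 2.4: `𝒞`-symmetry of `q` together with symmetry of the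
block functions `q^{Cⱼ}` implies `𝒞`-decomposability. -/
theorem stmt6 {Ω : Type*} [MeasurableSpace Ω] (μ : Measure Ω) [IsProbabilityMeasure μ]
    {n r : ℕ} (T : Fin n → Ω → ℝ) (hties : NoTies μ T)
    (C : Fin r → Finset (Fin n)) (hne : ∀ j, (C j).Nonempty)
    (hdisj : ∀ i j : Fin r, i ≠ j → Disjoint (C i) (C j))
    (hcover : ∀ x : Fin n, ∃ j, x ∈ C j)
    (hqsym : ∀ A A' : Finset (Fin n),
      (∀ j, (A ∩ C j).card = (A' ∩ C j).card) → relQ μ T A = relQ μ T A')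
    (hblocksym : ∀ j, ∀ B B' : Finset (Fin n), B ⊆ C j → B' ⊆ C j → B.card = B'.card →
      relQBlock μ T (C j) B = relQBlock μ T (C j) B') :
    ∃ ctil : (Fin r → ℕ) → ℝ, ∀ A : Finset (Fin n),
      relQ μ T A = ctil (fun j => (A ∩ C j).card) * ∏ j, relQBlock μ T (C j) (A ∩ C j) := by
  classical
  set ctil : (Fin r → ℕ) → ℝ := fun a =>
    if h : ∃ A : Finset (Fin n), ∀ j, (A ∩ C j).card = a j then
      relQ μ T h.choose / ∏ j, relQBlock μ T (C j) (h.choose ∩ C j)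
    else 0 with hct
  refine ⟨ctil, fun A => ?_⟩
  have hex : ∃ A' : Finset (Fin n), ∀ j, (A' ∩ C j).card = (A ∩ C j).card := ⟨A, fun _ => rfl⟩
  set A' := hex.choose with hA'
  have hA'card : ∀ j, (A' ∩ C j).card = (A ∩ C j).card := hex.choose_spec
  have hq : relQ μ T A = relQ μ T A' := hqsym A A' (fun j => (hA'card j).symm)
  have hP : ∀ j, relQBlock μ T (C j) (A ∩ C j) = relQBlock μ T (C j) (A' ∩ C j) :=
    fun j => hblocksym j _ _ Finset.inter_subset_right Finset.inter_subset_right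
      (hA'card j).symm
  have hctil : ctil (fun j => (A ∩ C j).card)
      = relQ μ T A' / ∏ j, relQBlock μ T (C j) (A' ∩ C j) := by
    simp only [hct, dif_pos hex]
    rfl
  rw [hctil, hq, Finset.prod_congr rfl fun j _ => hP j]
  set P := ∏ j, relQBlock μ T (C j) (A' ∩ C j) with hPdef
  by_cases hP0 : P = 0
  · rw [hP0, mul_zero]
    obtain ⟨j, _, hj⟩ := Finset.prod_eq_zero_iff.mp (hPdef ▸ hP0)
    have h1 := relQ_le_block μ T (C j) A'
    have h2 : (0:ℝ) ≤ relQ μ T A' := ENNReal.toReal_nonneg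
    rw [hj] at h1
    linarith
  · field_simp
end
end

section
/- Let [n] be partitioned into nonempty blocks C₁,…,C_r with nⱼ = |Cⱼ|, let ψ : 2^{[r]} → {0,1} be semicoherent, and let φ : 2^{[n]} → {0,1} be the structure obtained by making each module a series system of its components: φ(A) = ψ({ j : A ∩ Cⱼ = Cⱼ }). Then the tail structural signature of φ satisfies, for every 0 ≤ k ≤ n, (1/C(n,k)) ∑_{A⊆[n], |A|=k} φ(A) = ∑_{(a₁,…,a_r)∈𝒯_k} [∏ⱼ C(nⱼ,aⱼ) / C(n,k)] · ψ({ j : aⱼ = nⱼ }). -/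
open MeasureTheory Finset
open scoped Classical

noncomputable section

section Aux
variable {n r : ℕ} (C : Fin r → Finset (Fin n))

lemma inter_biUnion_eq (hdisj : ∀ i j : Fin r, i ≠ j → Disjoint (C i) (C j))
    (b : Fin r → Finset (Fin n)) (hb : ∀ j, b j ⊆ C j) (j : Fin r) :
    (Finset.univ.biUnion b) ∩ C j = b j := by
  ext x
  simp only [Finset.mem_inter, Finset.mem_biUnion, Finset.mem_univ, true_and]
  constructor
  · rintro ⟨⟨i, hxi⟩, hxj⟩
    rcases eq_or_ne i j with rfl | hij
    · exact hxi
    · exact absurd hxj (Finset.disjoint_left.1 (hdisj i j hij) (hb i hxi))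
  · intro hx
    exact ⟨⟨j, hx⟩, hb j hx⟩

lemma biUnion_inter_eq (hcover : ∀ x : Fin n, ∃ j, x ∈ C j) (A : Finset (Fin n)) :
    (Finset.univ.biUnion fun j => A ∩ C j) = A := by
  ext x
  simp only [Finset.mem_biUnion, Finset.mem_univ, true_and, Finset.mem_inter]
  constructor
  · rintro ⟨j, hx, _⟩; exact hx
  · intro hx; obtain ⟨j, hj⟩ := hcover x; exact ⟨j, hx, hj⟩

lemma card_eq_sum_inter (hdisj : ∀ i j : Fin r, i ≠ j → Disjoint (C i) (C j))
    (hcover : ∀ x : Fin n, ∃ j, x ∈ C j) (A : Finset (Fin n)) :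
    A.card = ∑ j, (A ∩ C j).card := by
  conv_lhs => rw [← biUnion_inter_eq C hcover A]
  rw [Finset.card_biUnion]
  intro i _ j _ hij
  exact ((hdisj i j hij).mono Finset.inter_subset_right Finset.inter_subset_right)

lemma inter_eq_iff_card (A : Finset (Fin n)) (j : Fin r) :
    A ∩ C j = C j ↔ (A ∩ C j).card = (C j).card := by
  constructor
  · intro h; rw [h]
  · intro h
    exact Finset.eq_of_subset_of_card_le Finset.inter_subset_right h.ge

end Aux

/-- Example 4.3: structural tail signature of a system made of series
modules organized by a semicoherent structure `ψ`. -/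
theorem stmt15 {n r : ℕ} (C : Fin r → Finset (Fin n)) (hne : ∀ j, (C j).Nonempty)
    (hdisj : ∀ i j : Fin r, i ≠ j → Disjoint (C i) (C j))
    (hcover : ∀ x : Fin n, ∃ j, x ∈ C j)
    (ψ : Finset (Fin r) → ℝ) (hψ : Semicoherent ψ)
    (φ : Finset (Fin n) → ℝ)
    (hφ : ∀ A : Finset (Fin n), φ A = ψ (Finset.univ.filter fun j => A ∩ C j = C j)) :
    ∀ k ≤ n,
      (1 / (n.choose k : ℝ))
          * ∑ A ∈ Finset.univ.filter fun A : Finset (Fin n) => A.card = k, φ A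
        = ∑ a ∈ tuples C k,
            ((∏ j, ((C j).card.choose (a j) : ℝ)) / (n.choose k : ℝ))
              * ψ (Finset.univ.filter fun j => a j = (C j).card) := by
  intro k hk
  have key : ∑ A ∈ Finset.univ.filter fun A : Finset (Fin n) => A.card = k, φ A
      = ∑ a ∈ tuples C k,
          (∏ j, ((C j).card.choose (a j) : ℝ))
            * ψ (Finset.univ.filter fun j => a j = (C j).card) := by
    rw [← Finset.sum_fiberwise_of_maps_to
      (g := fun A : Finset (Fin n) => fun j => (A ∩ C j).card)
      (fun A hA => ?_) φ]
    · apply Finset.sum_congr rfl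
      intro a ha
      have hconst : ∀ A ∈ (Finset.univ.filter fun A : Finset (Fin n) => A.card = k).filter
          (fun A => (fun j => (A ∩ C j).card) = a),
          φ A = ψ (Finset.univ.filter fun j => a j = (C j).card) := by
        intro A hA
        simp only [Finset.mem_filter] at hA
        rw [hφ]
        congr 1
        apply Finset.filter_congr
        intro j _
        rw [inter_eq_iff_card C A j, ← congrFun hA.2 j]
      rw [Finset.sum_congr rfl hconst, Finset.sum_const, nsmul_eq_mul]
      congr 1
      -- cardinality of the fiber
      have hacard : ∀ j, a j ≤ (C j).card := by
        intro j
        have := (Finset.mem_filter.1 ha).1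
        rw [Fintype.mem_piFinset] at this
        simpa [Nat.lt_succ_iff] using this j
      have hasum : ∑ j, a j = k := (Finset.mem_filter.1 ha).2
      have hcard : ((Finset.univ.filter fun A : Finset (Fin n) => A.card = k).filter
          (fun A => (fun j => (A ∩ C j).card) = a)).card
          = ∏ j, (C j).card.choose (a j) := by
        have hbij : ((Finset.univ.filter fun A : Finset (Fin n) => A.card = k).filter
            (fun A => (fun j => (A ∩ C j).card) = a)).card
            = (Fintype.piFinset fun j => (C j).powersetCard (a j)).card := by
          apply Finset.card_bij' (i := fun A _ => fun j => A ∩ C j)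
            (j := fun b _ => Finset.univ.biUnion b)
          · intro A hA
            simp only [Finset.mem_filter, Finset.mem_univ, true_and] at hA
            rw [Fintype.mem_piFinset]
            intro j
            rw [Finset.mem_powersetCard]
            exact ⟨Finset.inter_subset_right, congrFun hA.2 j⟩
          · intro b hb
            rw [Fintype.mem_piFinset] at hb
            have hsub : ∀ j, b j ⊆ C j := fun j => (Finset.mem_powersetCard.1 (hb j)).1
            have hbc : ∀ j, (b j).card = a j := fun j => (Finset.mem_powersetCard.1 (hb j)).2
            have hint : ∀ j, (Finset.univ.biUnion b) ∩ C j = b j :=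
              inter_biUnion_eq C hdisj b hsub
            simp only [Finset.mem_filter, Finset.mem_univ, true_and]
            constructor
            · rw [card_eq_sum_inter C hdisj hcover, ← hasum]
              exact Finset.sum_congr rfl fun j _ => by rw [hint j, hbc j]
            · funext j; rw [hint j, hbc j]
          · intro A hA
            exact biUnion_inter_eq C hcover A
          · intro b hb
            rw [Fintype.mem_piFinset] at hb
            have hsub : ∀ j, b j ⊆ C j := fun j => (Finset.mem_powersetCard.1 (hb j)).1
            funext j
            exact inter_biUnion_eq C hdisj b hsub j
        rw [hbij, Fintype.card_piFinset]
        exact Finset.prod_congr rfl fun j _ => Finset.card_powersetCard _ _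
      rw [hcard]
      push_cast
      ring
    · simp only [Finset.mem_filter, Finset.mem_univ, true_and] at hA
      simp only [tuples, Finset.mem_filter, Fintype.mem_piFinset, Finset.mem_range,
        Nat.lt_succ_iff]
      refine ⟨fun j => Finset.card_le_card Finset.inter_subset_right, ?_⟩
      rw [← card_eq_sum_inter C hdisj hcover A, hA]
  rw [key, Finset.mul_sum]
  apply Finset.sum_congr rfl
  intro a _
  ring
end
end

section
/- Let χ : 2^{[n]} → {0,1} be semicoherent with cumulative structural signature S_a = 1 − (1/C(n, n−a)) ∑_{B⊆[n], |B|=n−a} χ(B) for 0 ≤ a ≤ n. On the disjoint union of two copies of [n] (a 2n-component system), define the system-level redundant structure φ₁ by φ₁(A) = max(χ(A'), χ(A'')), where A' and A'' are the traces of A on the first and second copy. Then the cumulative structural signature of φ₁ satisfies, for every 0 ≤ k ≤ 2n, 1 − (1/C(2n,k)) ∑_{|A|=k} φ₁(A) = ∑_{a = max(0, n−k)}^{min(n, 2n−k)} [C(n,a)·C(n, 2n−k−a) / C(2n,k)] · S_a · S_{2n−k−a}. -/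
open MeasureTheory Finset
open scoped Classical

noncomputable section

/-- Example 4.5, redundancy at system level: cumulative structural
signature of the parallel connection of two copies of a structure `χ`. -/
theorem stmt17 {n : ℕ} (χ : Finset (Fin n) → ℝ) (hχ : Semicoherent χ)
    (S : ℕ → ℝ)
    (hS : ∀ a ≤ n, S a = 1 - (1 / (n.choose (n - a) : ℝ))
      * ∑ B ∈ Finset.univ.filter fun B : Finset (Fin n) => B.card = n - a, χ B)
    (φ₁ : Finset (Fin n ⊕ Fin n) → ℝ)
    (hφ₁ : ∀ A : Finset (Fin n ⊕ Fin n),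
      φ₁ A = max (χ (Finset.univ.filter fun i => Sum.inl i ∈ A))
               (χ (Finset.univ.filter fun i => Sum.inr i ∈ A))) :
    ∀ k ≤ 2 * n,
      1 - (1 / ((2 * n).choose k : ℝ))
          * ∑ A ∈ Finset.univ.filter fun A : Finset (Fin n ⊕ Fin n) => A.card = k, φ₁ A
        = ∑ a ∈ Finset.Icc (n - k) (min n (2 * n - k)),
            ((n.choose a : ℝ) * (n.choose (2 * n - k - a) : ℝ) / ((2 * n).choose k : ℝ))
              * S a * S (2 * n - k - a) := by
  intro k hk
  have hCpos : (0:ℝ) < ((2*n).choose k : ℝ) := by exact_mod_cast Nat.choose_pos hk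
  -- rewrite φ₁ via traces
  have hmax : ∀ A : Finset (Fin n ⊕ Fin n),
      φ₁ A = 1 - (1 - χ A.toLeft) * (1 - χ A.toRight) := by
    intro A
    have hL : (Finset.univ.filter fun i => Sum.inl i ∈ A) = A.toLeft := by ext x; simp
    have hR : (Finset.univ.filter fun i => Sum.inr i ∈ A) = A.toRight := by ext x; simp
    rw [hφ₁, hL, hR]
    rcases hχ.2.1 A.toLeft with h1 | h1 <;> rcases hχ.2.1 A.toRight with h2 | h2 <;>
      rw [h1, h2] <;> norm_num
  -- cardinality of the level sets
  have hcardk : (Finset.univ.filter fun A : Finset (Fin n ⊕ Fin n) => A.card = k).card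
      = (2*n).choose k := by
    rw [show (Finset.univ.filter fun A : Finset (Fin n ⊕ Fin n) => A.card = k)
        = Finset.powersetCard k Finset.univ from by
      rw [Finset.powersetCard_eq_filter, Finset.powerset_univ]]
    rw [Finset.card_powersetCard, Finset.card_univ]
    simp [two_mul]
  -- block sums
  have hblock : ∀ b : ℕ,
      (∑ B ∈ Finset.univ.filter fun B : Finset (Fin n) => B.card = b, (1 - χ B))
        = (n.choose b : ℝ) * S (n - b) := by
    intro b
    by_cases hb : b ≤ n
    · have hcard : (Finset.univ.filter fun B : Finset (Fin n) => B.card = b).card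
          = n.choose b := by
        rw [show (Finset.univ.filter fun B : Finset (Fin n) => B.card = b)
            = Finset.powersetCard b Finset.univ from by
          rw [Finset.powersetCard_eq_filter, Finset.powerset_univ]]
        rw [Finset.card_powersetCard, Finset.card_univ, Fintype.card_fin]
      have hsub : n - (n - b) = b := Nat.sub_sub_self hb
      have hSb := hS (n - b) (Nat.sub_le _ _)
      rw [hsub] at hSb
      have hpos : (0:ℝ) < (n.choose b : ℝ) := by exact_mod_cast Nat.choose_pos hb
      rw [Finset.sum_sub_distrib, Finset.sum_const, hcard, hSb]
      field_simp
      rw [nsmul_eq_mul, mul_one]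
    · have hempty : (Finset.univ.filter fun B : Finset (Fin n) => B.card = b) = ∅ := by
        ext B
        simp only [Finset.mem_filter, Finset.mem_univ, true_and, Finset.notMem_empty,
          iff_false]
        intro h
        exact hb (h ▸ (Finset.card_le_univ B).trans_eq (by simp))
      rw [hempty, Finset.sum_empty, Nat.choose_eq_zero_of_lt (lt_of_not_ge hb)]
      simp
  -- splitting the sum over A by traces
  have hsplit : (∑ A ∈ Finset.univ.filter fun A : Finset (Fin n ⊕ Fin n) => A.card = k,
        (1 - χ A.toLeft) * (1 - χ A.toRight))
      = ∑ b ∈ Finset.range (k+1),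
          ((∑ B ∈ Finset.univ.filter fun B : Finset (Fin n) => B.card = b, (1 - χ B)) *
           (∑ C ∈ Finset.univ.filter fun C : Finset (Fin n) => C.card = k - b, (1 - χ C))) := by
    have hprod : ∀ b ∈ Finset.range (k+1),
        ((∑ B ∈ Finset.univ.filter fun B : Finset (Fin n) => B.card = b, (1 - χ B)) *
         (∑ C ∈ Finset.univ.filter fun C : Finset (Fin n) => C.card = k - b, (1 - χ C)))
        = ∑ p ∈ (Finset.univ.filter fun B : Finset (Fin n) => B.card = b) ×ˢ
              (Finset.univ.filter fun C : Finset (Fin n) => C.card = k - b),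
            (1 - χ p.1) * (1 - χ p.2) := by
      intro b _
      rw [Finset.sum_mul_sum, Finset.sum_product]
    rw [Finset.sum_congr rfl hprod,
      ← Finset.sum_sigma (s := Finset.range (k+1))
        (t := fun b => (Finset.univ.filter fun B : Finset (Fin n) => B.card = b) ×ˢ
          (Finset.univ.filter fun C : Finset (Fin n) => C.card = k - b))
        (f := fun x : Σ _ : ℕ, Finset (Fin n) × Finset (Fin n) => (1 - χ x.2.1) * (1 - χ x.2.2))]
    refine Finset.sum_nbij'
      (i := fun A : Finset (Fin n ⊕ Fin n) =>
        (⟨A.toLeft.card, (A.toLeft, A.toRight)⟩ : Σ _ : ℕ, Finset (Fin n) × Finset (Fin n)))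
      (j := fun x : Σ _ : ℕ, Finset (Fin n) × Finset (Fin n) => x.2.1.disjSum x.2.2)
      ?_ ?_ ?_ ?_ ?_
    · intro A hA
      simp only [Finset.mem_filter, Finset.mem_univ, true_and] at hA
      have hadd := Finset.card_toLeft_add_card_toRight (u := A)
      simp only [Finset.mem_sigma, Finset.mem_range, Finset.mem_product, Finset.mem_filter,
        Finset.mem_univ, true_and]
      omega
    · intro x hx
      simp only [Finset.mem_sigma, Finset.mem_range, Finset.mem_product, Finset.mem_filter,
        Finset.mem_univ, true_and] at hx
      simp only [Finset.mem_filter, Finset.mem_univ, true_and, Finset.card_disjSum]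
      omega
    · intro A hA
      exact Finset.toLeft_disjSum_toRight
    · rintro ⟨b, B, C⟩ hx
      simp only [Finset.mem_sigma, Finset.mem_range, Finset.mem_product, Finset.mem_filter,
        Finset.mem_univ, true_and] at hx
      simp only [Finset.toLeft_disjSum, Finset.toRight_disjSum]
      obtain ⟨-, hB, -⟩ := hx
      subst hB
      rfl
    · intro A hA
      rfl
  -- reindexing
  have key : (∑ b ∈ Finset.range (k+1),
        (((n.choose b : ℝ) * S (n - b)) * ((n.choose (k - b) : ℝ) * S (n - (k - b)))))
      = ∑ a ∈ Finset.Icc (n - k) (min n (2*n - k)),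
          (n.choose a : ℝ) * (n.choose (2*n - k - a) : ℝ) * S a * S (2*n - k - a) := by
    rw [← Finset.sum_subset (s₁ := Finset.Icc (k - n) (min k n))
      (by intro b hb; simp only [Finset.mem_Icc, Finset.mem_range] at *; omega)
      (by
        intro b hb hnb
        simp only [Finset.mem_Icc, Finset.mem_range] at hb hnb
        have : n < b ∨ n < k - b := by omega
        rcases this with h | h
        · rw [Nat.choose_eq_zero_of_lt h]; simp
        · rw [Nat.choose_eq_zero_of_lt h]; simp)]
    refine Finset.sum_nbij' (i := fun b => n - b) (j := fun a => n - a) ?_ ?_ ?_ ?_ ?_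
    · intro b hb; simp only [Finset.mem_Icc] at *; omega
    · intro a ha; simp only [Finset.mem_Icc] at *; omega
    · intro b hb; simp only [Finset.mem_Icc] at hb; show n - (n - b) = b; omega
    · intro a ha; simp only [Finset.mem_Icc] at ha; show n - (n - a) = a; omega
    · intro b hb
      simp only [Finset.mem_Icc] at hb
      have h1 : 2*n - k - (n - b) = n - (k - b) := by omega
      rw [h1, Nat.choose_symm (by omega : b ≤ n),
        Nat.choose_symm (by omega : k - b ≤ n)]
      ring
  -- putting it together
  rw [Finset.sum_congr rfl fun A _ => hmax A, Finset.sum_sub_distrib, Finset.sum_const,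
    hcardk, nsmul_eq_mul, hsplit]
  rw [Finset.sum_congr rfl fun b _ => by rw [hblock b, hblock (k - b)], key]
  rw [Finset.sum_congr rfl
    (fun a _ => by
      rw [div_mul_eq_mul_div, div_mul_eq_mul_div] :
      ∀ a ∈ Finset.Icc (n - k) (min n (2*n - k)),
        ((n.choose a : ℝ) * (n.choose (2*n - k - a) : ℝ) / ((2*n).choose k : ℝ))
          * S a * S (2*n - k - a)
        = (n.choose a : ℝ) * (n.choose (2*n - k - a) : ℝ) * S a * S (2*n - k - a)
            / ((2*n).choose k : ℝ))]
  rw [← Finset.sum_div]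
  field_simp
  ring
end
end

section
/- Let χ : 2^{[n]} → {0,1} be semicoherent and let χ^d be its dual, χ^d(D) = 1 − χ([n]∖D). On the component set [n] × {1,2} (a 2n-component system), define the component-level redundant structure φ₂ by φ₂(A) = χ({ i ∈ [n] : (i,1) ∈ A or (i,2) ∈ A }). Then the cumulative structural signature of φ₂ satisfies, for every 0 ≤ k ≤ 2n, 1 − (1/C(2n,k)) ∑_{A⊆[n]×{1,2}, |A|=k} φ₂(A) = ∑_{(a₁,…,aₙ) : 0 ≤ aᵢ ≤ 2, a₁+⋯+aₙ = k} [∏ᵢ C(2,aᵢ) / C(2n,k)] · χ^d({ i : aᵢ = 0 }). -/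
open MeasureTheory Finset
open scoped Classical

noncomputable section

lemma step1 {n : ℕ} (k : ℕ) (F : (Fin n → Finset (Fin 2)) → ℝ) :
    ∑ A ∈ Finset.univ.filter fun A : Finset (Fin n × Fin 2) => A.card = k,
      F (fun i => (A.filter fun p => p.1 = i).image Prod.snd)
    = ∑ g ∈ Finset.univ.filter fun g : Fin n → Finset (Fin 2) => ∑ i, (g i).card = k,
      F g := by
  have hcard : ∀ A : Finset (Fin n × Fin 2), ∀ i : Fin n,
      ((A.filter fun p => p.1 = i).image Prod.snd).card
        = (A.filter fun p => p.1 = i).card := by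
    intro A i
    apply Finset.card_image_of_injOn
    intro p hp q hq hpq
    simp only [Finset.mem_coe, Finset.mem_filter] at hp hq
    exact Prod.ext (hp.2.trans hq.2.symm) hpq
  have hsum : ∀ A : Finset (Fin n × Fin 2),
      ∑ i, ((A.filter fun p => p.1 = i).image Prod.snd).card = A.card := by
    intro A
    rw [Finset.card_eq_sum_card_fiberwise (f := Prod.fst) (t := Finset.univ)
      (fun x _ => Finset.mem_univ _)]
    exact Finset.sum_congr rfl fun i _ => hcard A i
  have hback : ∀ g : Fin n → Finset (Fin 2),
      (fun i => (((Finset.univ.filter fun p : Fin n × Fin 2 => p.2 ∈ g p.1).filter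
        fun p => p.1 = i).image Prod.snd)) = g := by
    intro g
    funext i
    ext j
    simp only [Finset.mem_image, Finset.mem_filter, Finset.mem_univ, true_and]
    constructor
    · rintro ⟨⟨i', j'⟩, ⟨hj', rfl⟩, rfl⟩
      exact hj'
    · intro hj
      exact ⟨(i, j), ⟨hj, rfl⟩, rfl⟩
  refine Finset.sum_nbij' (i := fun A => fun i => (A.filter fun p => p.1 = i).image Prod.snd)
    (j := fun g => Finset.univ.filter fun p : Fin n × Fin 2 => p.2 ∈ g p.1) ?_ ?_ ?_ ?_ ?_
  · intro A hA
    simp only [Finset.mem_filter, Finset.mem_univ, true_and] at hA ⊢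
    rw [hsum A, hA]
  · intro g hg
    simp only [Finset.mem_filter, Finset.mem_univ, true_and] at hg ⊢
    rw [← hg, ← hsum (Finset.univ.filter fun p : Fin n × Fin 2 => p.2 ∈ g p.1)]
    exact Finset.sum_congr rfl fun i _ =>
      congrArg Finset.card (congrFun (hback g) i)
  · intro A hA
    ext ⟨i, j⟩
    simp only [Finset.mem_filter, Finset.mem_univ, true_and, Finset.mem_image]
    constructor
    · rintro ⟨⟨i', j'⟩, ⟨hA', hi'⟩, rfl⟩
      simpa [← hi'] using hA'
    · intro h
      exact ⟨(i, j), ⟨h, rfl⟩, rfl⟩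
  · intro g hg
    exact hback g
  · intro A hA
    rfl

lemma keylem {n : ℕ} (k : ℕ) (F : (Fin n → ℕ) → ℝ) :
    ∑ A ∈ Finset.univ.filter fun A : Finset (Fin n × Fin 2) => A.card = k,
      F (fun i => ((A.filter fun p => p.1 = i).image Prod.snd).card)
    = ∑ a ∈ (Fintype.piFinset fun _ : Fin n => Finset.range 3).filter
          fun a => ∑ i, a i = k,
        (∏ i, ((Nat.choose 2 (a i) : ℝ))) * F a := by
  rw [step1 k (fun g => F fun i => (g i).card)]
  rw [← Finset.sum_fiberwise_of_maps_to (g := fun (g : Fin n → Finset (Fin 2)) =>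
    (fun i => (g i).card)) (t := (Fintype.piFinset fun _ : Fin n => Finset.range 3).filter
      fun a => ∑ i, a i = k) ?_]
  · refine Finset.sum_congr rfl fun a ha => ?_
    have haT : ∑ i, a i = k := (Finset.mem_filter.1 ha).2
    have hfib : ((Finset.univ.filter fun g : Fin n → Finset (Fin 2) =>
        ∑ i, (g i).card = k).filter fun g => (fun i => (g i).card) = a)
        = Fintype.piFinset fun i => Finset.powersetCard (a i) (Finset.univ : Finset (Fin 2)) := by
      ext g
      simp only [Finset.mem_filter, Finset.mem_univ, true_and, Fintype.mem_piFinset,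
        Finset.mem_powersetCard_univ, funext_iff]
      constructor
      · rintro ⟨-, h⟩
        exact h
      · intro h
        exact ⟨by rw [Finset.sum_congr rfl fun i _ => h i]; exact haT, h⟩
    calc (∑ g ∈ (Finset.univ.filter fun g : Fin n → Finset (Fin 2) =>
          ∑ i, (g i).card = k).filter fun g => (fun i => (g i).card) = a,
            F fun i => (g i).card)
        = ∑ g ∈ (Finset.univ.filter fun g : Fin n → Finset (Fin 2) =>
          ∑ i, (g i).card = k).filter fun g => (fun i => (g i).card) = a, F a := by
          refine Finset.sum_congr rfl fun g hg => ?_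
          rw [(Finset.mem_filter.1 hg).2]
      _ = (∏ i, ((Nat.choose 2 (a i) : ℝ))) * F a := by
          rw [Finset.sum_const, hfib, nsmul_eq_mul]
          congr 1
          rw [Fintype.card_piFinset]
          push_cast
          refine Finset.prod_congr rfl fun i _ => ?_
          rw [Finset.card_powersetCard, Finset.card_univ, Fintype.card_fin]
  · intro g hg
    simp only [Finset.mem_filter, Finset.mem_univ, true_and] at hg ⊢
    refine ⟨Fintype.mem_piFinset.2 fun i => ?_, hg⟩
    simp only [Finset.mem_range]
    have := Finset.card_le_univ (g i)
    simp only [Finset.card_univ, Fintype.card_fin] at this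
    omega

lemma Ssum {n : ℕ} (k : ℕ) :
    ((Finset.univ.filter fun A : Finset (Fin n × Fin 2) => A.card = k).card : ℝ)
      = ((2 * n).choose k : ℝ) := by
  have hS : (Finset.univ.filter fun A : Finset (Fin n × Fin 2) => A.card = k)
      = Finset.powersetCard k Finset.univ := by
    ext A
    simp [Finset.mem_powersetCard_univ]
  rw [hS, Finset.card_powersetCard, Finset.card_univ, Fintype.card_prod,
    Fintype.card_fin, Fintype.card_fin, mul_comm]

/-- Example 4.5, redundancy at component level: cumulative structural
signature of the structure obtained by duplicating every component of `χ` in parallel. -/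
theorem stmt18 {n : ℕ} (χ : Finset (Fin n) → ℝ) (hχ : Semicoherent χ)
    (χd : Finset (Fin n) → ℝ) (hχd : ∀ D : Finset (Fin n), χd D = 1 - χ Dᶜ)
    (φ₂ : Finset (Fin n × Fin 2) → ℝ)
    (hφ₂ : ∀ A : Finset (Fin n × Fin 2),
      φ₂ A = χ (Finset.univ.filter fun i => (i, 0) ∈ A ∨ (i, 1) ∈ A)) :
    ∀ k ≤ 2 * n,
      1 - (1 / ((2 * n).choose k : ℝ))
          * ∑ A ∈ Finset.univ.filter fun A : Finset (Fin n × Fin 2) => A.card = k, φ₂ A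
        = ∑ a ∈ (Fintype.piFinset fun _ : Fin n => Finset.range 3).filter
              fun a => ∑ i, a i = k,
            ((∏ i, (Nat.choose 2 (a i) : ℝ)) / ((2 * n).choose k : ℝ))
              * χd (Finset.univ.filter fun i => a i = 0) := by
  intro k hk
  set T := (Fintype.piFinset fun _ : Fin n => Finset.range 3).filter
      fun a : Fin n → ℕ => ∑ i, a i = k with hT
  set C : ℝ := ((2 * n).choose k : ℝ) with hCdef
  have hC : C ≠ 0 := Nat.cast_ne_zero.2 (Nat.choose_pos hk).ne'
  set N : (Fin n → ℕ) → ℝ := fun a => ∏ i, ((Nat.choose 2 (a i) : ℝ)) with hN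
  have hmem : ∀ (A : Finset (Fin n × Fin 2)) (i : Fin n),
      (((i, (0 : Fin 2)) ∈ A ∨ (i, (1 : Fin 2)) ∈ A)
        ↔ ¬ ((A.filter fun p => p.1 = i).image Prod.snd).card = 0) := by
    intro A i
    rw [← ne_eq, Finset.card_ne_zero, Finset.image_nonempty,
      Finset.filter_nonempty_iff]
    constructor
    · rintro (h | h)
      exacts [⟨(i, 0), h, rfl⟩, ⟨(i, 1), h, rfl⟩]
    · rintro ⟨⟨i', j⟩, hmemA, rfl⟩
      fin_cases j
      · exact Or.inl hmemA
      · exact Or.inr hmemA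
  have hsum1 : ∑ A ∈ Finset.univ.filter fun A : Finset (Fin n × Fin 2) => A.card = k, φ₂ A
      = ∑ a ∈ T, N a * (1 - χd (Finset.univ.filter fun i => a i = 0)) := by
    have h1 := keylem k (fun a : Fin n → ℕ =>
      χ (Finset.univ.filter fun i => ¬ a i = 0))
    rw [show (∑ A ∈ Finset.univ.filter fun A : Finset (Fin n × Fin 2) => A.card = k, φ₂ A)
        = ∑ A ∈ Finset.univ.filter fun A : Finset (Fin n × Fin 2) => A.card = k,
          χ (Finset.univ.filter fun i =>
            ¬ ((A.filter fun p => p.1 = i).image Prod.snd).card = 0) from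
      Finset.sum_congr rfl fun A _ => by
        rw [hφ₂ A]
        congr 1
        exact Finset.filter_congr fun i _ => hmem A i]
    rw [h1]
    refine Finset.sum_congr rfl fun a _ => ?_
    congr 1
    rw [hχd, Finset.compl_filter]
    ring
  have hNC : ∑ a ∈ T, N a = C := by
    have h2 := keylem (n := n) k (fun _ : Fin n → ℕ => (1 : ℝ))
    simp only [mul_one] at h2
    rw [Finset.sum_const, nsmul_eq_mul, mul_one] at h2
    rw [← h2, Ssum]
  rw [hsum1]
  have hexp : ∑ a ∈ T, N a * (1 - χd (Finset.univ.filter fun i => a i = 0))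
      = C - ∑ a ∈ T, N a * χd (Finset.univ.filter fun i => a i = 0) := by
    rw [← hNC, ← Finset.sum_sub_distrib]
    exact Finset.sum_congr rfl fun a _ => by ring
  rw [hexp]
  rw [show (∑ a ∈ T, (N a / C) * χd (Finset.univ.filter fun i => a i = 0))
      = (1 / C) * ∑ a ∈ T, N a * χd (Finset.univ.filter fun i => a i = 0) from by
    rw [Finset.mul_sum]
    exact Finset.sum_congr rfl fun a _ => by ring]
  field_simp
  ring
end
end
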